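/- For each n ≥ 1 let M_n ∈ {1,…,n} be the index at which p ↦ a_p^{(n)} = p^n/(p!·2^p) attains its maximum on {1,…,n}. Then the sequence (M_n)_{n≥1} is increasing for all large enough n, and M_n ∼ n/ln n as n → ∞ (i.e. M_n·ln n/n → 1). -/

import Mathlib

open Filter

namespace CatalanSat

/-- A logical connective: `and` or `or`. -/
inductive Conn : Type
  | and : Conn
  | or : Conn

/-- An and/or tree: a binary plane tree with internal nodes labelled by a
connective and leaves labelled by a literal `(v, b)`: variable `v`, positive
if `b = true`, negated if `b = false`. -/
inductive AOTree : Type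
  | leaf (v : ℕ) (b : Bool) : AOTree
  | node (c : Conn) (l r : AOTree) : AOTree

namespace AOTree

/-- The list of leaf labels (variable index, polarity), from left to right. -/
def leaves : AOTree → List (ℕ × Bool)
  | .leaf v b => [(v, b)]
  | .node _ l r => leaves l ++ leaves r

/-- The size of an and/or tree is its number of leaves. -/
def size (t : AOTree) : ℕ := t.leaves.length

/-- The number of distinct variables appearing as leaf labels. -/
def varCount (t : AOTree) : ℕ := (t.leaves.map Prod.fst).toFinset.card

/-- The Boolean function computed by an and/or tree. -/
def eval : AOTree → (ℕ → Bool) → Bool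
  | .leaf v b, x => if b then x v else !(x v)
  | .node .and l r, x => eval l x && eval r x
  | .node .or l r, x => eval l x || eval r x

end AOTree

/-- A tree-structure: a binary plane tree with internal nodes labelled by a
connective and unlabelled leaves. -/
inductive Shape : Type
  | leaf : Shape
  | node (c : Conn) (l r : Shape) : Shape

/-- The size of a tree-structure is its number of leaves. -/
def Shape.size : Shape → ℕ
  | .leaf => 1
  | .node _ l r => Shape.size l + Shape.size r

/-- The tree-structure of an and/or tree (forget the leaf labels). -/
def AOTree.shape : AOTree → Shape
  | .leaf _ _ => .leaf
  | .node c l r => .node c l.shape r.shape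

/-- The label of the `i`-th leaf (junk default when out of range). -/
def lv (t : AOTree) (i : ℕ) : ℕ × Bool := t.leaves.getD i (0, true)

/-- Two and/or trees are equivalent when they have the same tree-structure,
two leaves are labelled by the same variable in one iff they are in the other,
and two leaves are labelled by the same literal in one iff they are in the other. -/
def TreeEquiv (A B : AOTree) : Prop :=
  A.shape = B.shape ∧
  ∀ i j : ℕ, i < A.leaves.length → j < A.leaves.length →
    (((lv A i).1 = (lv A j).1) ↔ ((lv B i).1 = (lv B j).1)) ∧
    ((lv A i = lv A j) ↔ (lv B i = lv B j))

/-- The equivalence relation on Boolean functions induced by equivalence of trees. -/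
def FunEquiv (f g : (ℕ → Bool) → Bool) : Prop :=
  ∃ A B : AOTree, TreeEquiv A B ∧ A.eval = f ∧ B.eval = g

/-- The number of equivalence classes of and/or trees satisfying a property
(the property being assumed invariant under equivalence). -/
noncomputable def classCount (P : AOTree → Prop) : ℕ :=
  Nat.card (Quot (fun A B : {t : AOTree // P t} => TreeEquiv A.1 B.1))

/-- `Tcount n K`: number of equivalence classes of and/or trees of size `n`
using at most `K` distinct variables. -/
noncomputable def Tcount (n K : ℕ) : ℕ := classCount fun t => t.size = n ∧ t.varCount ≤ K

/-- Number of such classes computing a function of the class `⟨f⟩`. -/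
noncomputable def TcountClass (n K : ℕ) (f : (ℕ → Bool) → Bool) : ℕ :=
  classCount fun t => t.size = n ∧ t.varCount ≤ K ∧ FunEquiv t.eval f

/-- `P_n⟨f⟩`: the probability that a uniform equivalence class of trees of size
`n` (at most `K` variables) computes a function of `⟨f⟩`. -/
noncomputable def Pclass (n K : ℕ) (f : (ℕ → Bool) → Bool) : ℝ :=
  (TcountClass n K f : ℝ) / (Tcount n K : ℝ)

/-- Number of classes of size `n`, at most `K` variables, computing exactly `f`. -/
noncomputable def TcountEval (n K : ℕ) (f : (ℕ → Bool) → Bool) : ℕ :=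
  classCount fun t => t.size = n ∧ t.varCount ≤ K ∧ t.eval = f

/-- Stirling numbers of the second kind. -/
def stirling : ℕ → ℕ → ℕ
  | 0, 0 => 1
  | 0, _ + 1 => 0
  | _ + 1, 0 => 0
  | n + 1, k + 1 => (k + 1) * stirling n (k + 1) + stirling n k

/-- `B n k = Σ_{p=1}^{k} S(n,p)·2^{−p}`. -/
noncomputable def B (n k : ℕ) : ℝ :=
  ∑ p ∈ Finset.Icc 1 k, (stirling n p : ℝ) / 2 ^ p

/-- `a n p = p^n/(p!·2^p)`. -/
noncomputable def a (n p : ℕ) : ℝ :=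
  (p : ℝ) ^ n / ((Nat.factorial p : ℝ) * 2 ^ p)

/-- `rat_n = B_{n−1,k_n}/B_{n,k_n}`. -/
noncomputable def rat (k : ℕ → ℕ) (n : ℕ) : ℝ := B (n - 1) (k n) / B n (k n)

/-- The complexity `L(f)`: minimal size of an and/or tree computing `f`. -/
noncomputable def complexity (f : (ℕ → Bool) → Bool) : ℕ :=
  sInf {m | ∃ t : AOTree, t.size = m ∧ t.eval = f}

/-- The variable `x_i` is essential for `f`. -/
def Essential (i : ℕ) (f : (ℕ → Bool) → Bool) : Prop :=
  ∃ x : ℕ → Bool, f (Function.update x i false) ≠ f (Function.update x i true)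

/-- `E(f)`: the number of essential variables of `f`. -/
noncomputable def essCount (f : (ℕ → Bool) → Bool) : ℕ :=
  Nat.card {i : ℕ // Essential i f}

/-- The multiplicity `R⟨f⟩ = L⟨f⟩ − E⟨f⟩`. -/
noncomputable def mult (f : (ℕ → Bool) → Bool) : ℕ := complexity f - essCount f

/-- `M` is, for each `n ≥ 1`, an index of `{1,…,n}` maximizing `p ↦ p^n/(p!·2^p)`. -/
def IsArgmax (M : ℕ → ℕ) : Prop :=
  ∀ n, 1 ≤ n → M n ∈ Finset.Icc 1 n ∧ ∀ p ∈ Finset.Icc 1 n, a n p ≤ a n (M n)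

/-- There is a leaf labelled by the given literal linked to the root by
`∨`-labelled internal nodes only. -/
def orLeaf : AOTree → ℕ × Bool → Prop
  | .leaf v b, l => (v, b) = l
  | .node .or A B, l => orLeaf A l ∨ orLeaf B l
  | .node .and _ _, _ => False

/-- There is a leaf labelled by the given literal linked to the root by
`∧`-labelled internal nodes only. -/
def andLeaf : AOTree → ℕ × Bool → Prop
  | .leaf v b, l => (v, b) = l
  | .node .and A B, l => andLeaf A l ∨ andLeaf B l
  | .node .or _ _, _ => False

/-- A simple tautology: two leaves labelled by a variable and its negation,
both linked to the root through `∨`-connectives only. -/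
def IsSimpleTautology (t : AOTree) : Prop :=
  ∃ v b, orLeaf t (v, b) ∧ orLeaf t (v, !b)

/-- A simple contradiction: the dual notion. -/
def IsSimpleContradiction (t : AOTree) : Prop :=
  ∃ v b, andLeaf t (v, b) ∧ andLeaf t (v, !b)

/-- A tautology: a tree computing the constant function `true`. -/
def IsTautology (t : AOTree) : Prop := ∀ x : ℕ → Bool, t.eval x = true

/-- A simple-x of type T: one subtree of the root is a single leaf, the other
is a simple tautology if the root is `∧`, a simple contradiction if it is `∨`. -/
def IsSimpleXT (t : AOTree) : Prop :=
  (∃ v b s, (t = .node .and (.leaf v b) s ∨ t = .node .and s (.leaf v b)) ∧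
    IsSimpleTautology s) ∨
  (∃ v b s, (t = .node .or (.leaf v b) s ∨ t = .node .or s (.leaf v b)) ∧
    IsSimpleContradiction s)

/-- A simple-x of type X: one subtree of the root is a single leaf `ℓ`, the root
is `∧` (resp. `∨`), and the other subtree has a leaf labelled by the literal of
`ℓ` linked to its root by `∨`-only (resp. `∧`-only) internal nodes. -/
def IsSimpleXX (t : AOTree) : Prop :=
  (∃ v b s, (t = .node .and (.leaf v b) s ∨ t = .node .and s (.leaf v b)) ∧
    orLeaf s (v, b)) ∨
  (∃ v b s, (t = .node .or (.leaf v b) s ∨ t = .node .or s (.leaf v b)) ∧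
    andLeaf s (v, b))

private lemma a_pos {n p : ℕ} (hp : 1 ≤ p) : 0 < a n p := by
  have hp' : (0:ℝ) < (p:ℝ) := by exact_mod_cast hp
  exact div_pos (pow_pos hp' n)
    (mul_pos (by exact_mod_cast (Nat.factorial_pos p)) (pow_pos two_pos p))

private lemma a_succ_n (n p : ℕ) : a (n + 1) p = (p : ℝ) * a n p := by
  simp only [a, pow_succ]
  ring

/-- From `a n (p+1) ≤ a n p`, get `(p+1)^n ≤ 2(p+1) p^n`. -/
private lemma ratio_right {n p : ℕ} (h : a n (p + 1) ≤ a n p) :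
    ((p : ℝ) + 1) ^ n ≤ 2 * ((p : ℝ) + 1) * (p : ℝ) ^ n := by
  have hd1 : (0:ℝ) < (Nat.factorial (p+1) : ℝ) * 2 ^ (p+1) :=
    mul_pos (by exact_mod_cast (Nat.factorial_pos (p+1))) (pow_pos two_pos _)
  have hd2 : (0:ℝ) < (Nat.factorial p : ℝ) * 2 ^ p :=
    mul_pos (by exact_mod_cast (Nat.factorial_pos p)) (pow_pos two_pos _)
  unfold a at h
  rw [div_le_div_iff₀ hd1 hd2] at h
  have hfac : ((Nat.factorial (p+1) : ℝ)) = ((p:ℝ)+1) * (Nat.factorial p : ℝ) := by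
    rw [Nat.factorial_succ]; push_cast; ring
  have h2 : (((p:ℕ)+1 : ℕ) : ℝ) = (p:ℝ) + 1 := by push_cast; ring
  rw [h2, hfac, pow_succ (2:ℝ) p] at h
  have := le_of_mul_le_mul_right (by nlinarith [h] : ((p:ℝ)+1)^n * ((Nat.factorial p : ℝ) * 2 ^ p) ≤ (2 * ((p:ℝ)+1) * (p:ℝ)^n) * ((Nat.factorial p : ℝ) * 2 ^ p)) hd2
  exact this

/-- From `a n p ≤ a n (p+1)`, get `2(p+1) p^n ≤ (p+1)^n`. -/
private lemma ratio_left {n p : ℕ} (h : a n p ≤ a n (p + 1)) :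
    2 * ((p : ℝ) + 1) * (p : ℝ) ^ n ≤ ((p : ℝ) + 1) ^ n := by
  have hd1 : (0:ℝ) < (Nat.factorial (p+1) : ℝ) * 2 ^ (p+1) :=
    mul_pos (by exact_mod_cast (Nat.factorial_pos (p+1))) (pow_pos two_pos _)
  have hd2 : (0:ℝ) < (Nat.factorial p : ℝ) * 2 ^ p :=
    mul_pos (by exact_mod_cast (Nat.factorial_pos p)) (pow_pos two_pos _)
  unfold a at h
  rw [div_le_div_iff₀ hd2 hd1] at h
  have hfac : ((Nat.factorial (p+1) : ℝ)) = ((p:ℝ)+1) * (Nat.factorial p : ℝ) := by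
    rw [Nat.factorial_succ]; push_cast; ring
  have h2 : (((p:ℕ)+1 : ℕ) : ℝ) = (p:ℝ) + 1 := by push_cast; ring
  rw [h2, hfac, pow_succ (2:ℝ) p] at h
  have := le_of_mul_le_mul_right (by nlinarith [h] : (2 * ((p:ℝ)+1) * (p:ℝ)^n) * ((Nat.factorial p : ℝ) * 2 ^ p) ≤ ((p:ℝ)+1)^n * ((Nat.factorial p : ℝ) * 2 ^ p)) hd2
  exact this

/-- Upper-crossing consequence: `n ≤ (p+1)·log(2(p+1))`. -/
private lemma keyA {n p : ℕ} (hp : 1 ≤ p)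
    (h : ((p : ℝ) + 1) ^ n ≤ 2 * ((p : ℝ) + 1) * (p : ℝ) ^ n) :
    (n : ℝ) ≤ ((p : ℝ) + 1) * Real.log (2 * ((p : ℝ) + 1)) := by
  set x : ℝ := (p : ℝ) with hx
  have hx1 : (1:ℝ) ≤ x := by rw [hx]; exact_mod_cast hp
  have hx0 : (0:ℝ) < x := by linarith
  have hx10 : (0:ℝ) < x + 1 := by linarith
  have hlog := Real.log_le_log (pow_pos hx10 n) h
  rw [Real.log_pow, Real.log_mul (by positivity) (ne_of_gt (pow_pos hx0 n)),
    Real.log_pow] at hlog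
  -- hlog : n * log (x+1) ≤ log (2*(x+1)) + n * log x
  have hgap : (1:ℝ) / (x + 1) ≤ Real.log (x + 1) - Real.log x := by
    have h1 := Real.log_le_sub_one_of_pos (show (0:ℝ) < x / (x + 1) by positivity)
    rw [Real.log_div (ne_of_gt hx0) (ne_of_gt hx10)] at h1
    have : x / (x + 1) - 1 = -(1 / (x + 1)) := by field_simp; ring
    rw [this] at h1
    linarith
  have hn : (0:ℝ) ≤ (n : ℝ) := Nat.cast_nonneg n
  have h3 : (n : ℝ) * (1 / (x + 1)) ≤ Real.log (2 * (x + 1)) := by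
    nlinarith [mul_le_mul_of_nonneg_left hgap hn]
  rw [mul_one_div, div_le_iff₀ hx10] at h3
  linarith [h3]

/-- Lower-crossing consequence: `p·log(2(p+1)) ≤ n`. -/
private lemma keyB {n p : ℕ} (hp : 1 ≤ p)
    (h : 2 * ((p : ℝ) + 1) * (p : ℝ) ^ n ≤ ((p : ℝ) + 1) ^ n) :
    (p : ℝ) * Real.log (2 * ((p : ℝ) + 1)) ≤ (n : ℝ) := by
  set x : ℝ := (p : ℝ) with hx
  have hx1 : (1:ℝ) ≤ x := by rw [hx]; exact_mod_cast hp
  have hx0 : (0:ℝ) < x := by linarith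
  have hx10 : (0:ℝ) < x + 1 := by linarith
  have hlog := Real.log_le_log (by positivity) h
  rw [Real.log_pow, Real.log_mul (by positivity) (ne_of_gt (pow_pos hx0 n)),
    Real.log_pow] at hlog
  -- hlog : log (2*(x+1)) + n * log x ≤ n * log (x+1)
  have hgap : Real.log (x + 1) - Real.log x ≤ 1 / x := by
    have h1 := Real.log_le_sub_one_of_pos (show (0:ℝ) < (x + 1) / x by positivity)
    rw [Real.log_div (ne_of_gt hx10) (ne_of_gt hx0)] at h1
    have : (x + 1) / x - 1 = 1 / x := by field_simp; ring
    rw [this] at h1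
    linarith
  have hn : (0:ℝ) ≤ (n : ℝ) := Nat.cast_nonneg n
  have h3 : Real.log (2 * (x + 1)) ≤ (n : ℝ) * (1 / x) := by
    nlinarith [mul_le_mul_of_nonneg_left hgap hn]
  rw [mul_one_div, le_div_iff₀ hx0] at h3
  linarith [h3]

set_option maxHeartbeats 1600000 in
/-- the sequence `(M_n)` of maximizers of `p ↦ p^n/(p!·2^p)` on
`{1,…,n}` is eventually increasing and satisfies `M_n ∼ n/ln n`. -/
theorem stmt_6 (M : ℕ → ℕ) (hM : IsArgmax M) :
    (∃ N, ∀ n, N ≤ n → M n ≤ M (n + 1)) ∧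
    Tendsto (fun n => (M n : ℝ) * Real.log n / (n : ℝ)) atTop (nhds 1) := by
  constructor
  · -- monotonicity, with N = 1
    refine ⟨1, fun n hn => ?_⟩
    by_contra hlt
    push_neg at hlt
    obtain ⟨hmem, hmax⟩ := hM n hn
    obtain ⟨hmem', hmax'⟩ := hM (n+1) (by omega)
    simp only [Finset.mem_Icc] at hmem hmem'
    have h1 : a n (M (n+1)) ≤ a n (M n) :=
      hmax _ (Finset.mem_Icc.2 ⟨hmem'.1, by omega⟩)
    have h2 : a (n+1) (M n) ≤ a (n+1) (M (n+1)) :=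
      hmax' _ (Finset.mem_Icc.2 ⟨hmem.1, by omega⟩)
    rw [a_succ_n, a_succ_n] at h2
    have hpos : 0 < a n (M (n+1)) := a_pos hmem'.1
    have hcast : (M (n+1) : ℝ) < (M n : ℝ) := by exact_mod_cast hlt
    nlinarith
  · -- the limit
    have hlogN : Tendsto (fun n : ℕ => Real.log n) atTop atTop :=
      Real.tendsto_log_atTop.comp tendsto_natCast_atTop_atTop
    have h2n : Tendsto (fun n : ℕ => 2 * (n : ℝ)) atTop atTop :=
      (tendsto_natCast_atTop_atTop).const_mul_atTop two_pos
    have hlog2N : Tendsto (fun n : ℕ => Real.log (2 * (n : ℝ))) atTop atTop :=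
      Real.tendsto_log_atTop.comp h2n
    have HC : Tendsto (fun x : ℝ => Real.log x / x) atTop (nhds 0) :=
      Real.isLittleO_log_id_atTop.tendsto_div_nhds_zero
    have h_logn_div_n : Tendsto (fun n : ℕ => Real.log n / (n : ℝ)) atTop (nhds 0) :=
      HC.comp tendsto_natCast_atTop_atTop
    -- log(2n)/log n → 1
    have h_ratio1 : Tendsto (fun n : ℕ => Real.log (2 * (n : ℝ)) / Real.log n)
        atTop (nhds 1) := by
      have heq : ∀ᶠ n : ℕ in atTop,
          Real.log 2 / Real.log n + 1 = Real.log (2 * (n : ℝ)) / Real.log n := by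
        filter_upwards [eventually_ge_atTop 2] with n hn
        have hn0 : (n : ℝ) ≠ 0 := by positivity
        have hln : Real.log n ≠ 0 := by
          have : (1:ℝ) < (n:ℝ) := by exact_mod_cast hn
          exact ne_of_gt (Real.log_pos this)
        rw [Real.log_mul two_ne_zero hn0, add_div, div_self hln]
      have hlim : Tendsto (fun n : ℕ => Real.log 2 / Real.log n + 1) atTop (nhds 1) := by
        have := (tendsto_const_nhds (x := Real.log 2)).div_atTop hlogN
        simpa using this.add tendsto_const_nhds
      exact hlim.congr' heq
    have h_ratio1' : Tendsto (fun n : ℕ => Real.log n / Real.log (2 * (n : ℝ)))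
        atTop (nhds 1) := by
      have := h_ratio1.inv₀ one_ne_zero
      simpa [inv_div] using this
    -- log(log(2n))/log n → 0
    have h_llog : Tendsto
        (fun n : ℕ => Real.log (Real.log (2 * (n : ℝ))) / Real.log n) atTop (nhds 0) := by
      have heq : ∀ᶠ n : ℕ in atTop,
          (Real.log (Real.log (2 * (n : ℝ))) / Real.log (2 * (n : ℝ))) *
            (Real.log (2 * (n : ℝ)) / Real.log n)
          = Real.log (Real.log (2 * (n : ℝ))) / Real.log n := by
        filter_upwards [hlog2N.eventually (eventually_gt_atTop 0)] with n hn
        field_simp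
      have hlim := ((HC.comp hlog2N).mul h_ratio1)
      rw [zero_mul] at hlim
      exact hlim.congr' heq
    -- D n := log n - log(log(2n)) ; log n / D n → 1
    have hD : Tendsto
        (fun n : ℕ => Real.log n / (Real.log n - Real.log (Real.log (2 * (n : ℝ)))))
        atTop (nhds 1) := by
      have hpre : Tendsto
          (fun n : ℕ => (Real.log n - Real.log (Real.log (2 * (n : ℝ)))) / Real.log n)
          atTop (nhds 1) := by
        have heq : ∀ᶠ n : ℕ in atTop,
            1 - Real.log (Real.log (2 * (n : ℝ))) / Real.log n
            = (Real.log n - Real.log (Real.log (2 * (n : ℝ)))) / Real.log n := by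
          filter_upwards [eventually_ge_atTop 2] with n hn
          have hln : Real.log n ≠ 0 := by
            have : (1:ℝ) < (n:ℝ) := by exact_mod_cast hn
            exact ne_of_gt (Real.log_pos this)
          rw [sub_div, div_self hln]
        have := (tendsto_const_nhds (x := (1:ℝ))).sub h_llog
        rw [sub_zero] at this
        exact this.congr' heq
      have := hpre.inv₀ one_ne_zero
      simpa [inv_div] using this
    -- the two squeeze sequences
    set Lo : ℕ → ℝ := fun n =>
      ((n : ℝ) / Real.log (2 * (n : ℝ)) - 1) * (Real.log n / (n : ℝ)) with hLodef
    set Up : ℕ → ℝ := fun n =>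
      ((n : ℝ) / (Real.log n - Real.log (Real.log (2 * (n : ℝ)))) + 1) *
        (Real.log n / (n : ℝ)) with hUpdef
    have hLo : Tendsto Lo atTop (nhds 1) := by
      have heq : ∀ᶠ n : ℕ in atTop,
          Real.log n / Real.log (2 * (n : ℝ)) - Real.log n / (n : ℝ) = Lo n := by
        filter_upwards [eventually_ge_atTop 2] with n hn
        have hn0 : (n : ℝ) ≠ 0 := by positivity
        have hln : Real.log (2 * (n : ℝ)) ≠ 0 := by
          have : (1:ℝ) < 2 * (n:ℝ) := by
            have : (2:ℝ) ≤ (n:ℝ) := by exact_mod_cast hn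
            linarith
          exact ne_of_gt (Real.log_pos this)
        simp only [hLodef]
        field_simp
      have := h_ratio1'.sub h_logn_div_n
      rw [sub_zero] at this
      exact this.congr' heq
    have hUp : Tendsto Up atTop (nhds 1) := by
      have hDpos : ∀ᶠ n : ℕ in atTop,
          0 < Real.log n - Real.log (Real.log (2 * (n : ℝ))) := by
        filter_upwards [h_llog.eventually (eventually_le_nhds (by norm_num : (0:ℝ) < 1/2)),
          eventually_ge_atTop 2] with n h1 hn
        have hln : 0 < Real.log n := Real.log_pos (by exact_mod_cast hn)
        have := (div_le_iff₀ hln).mp h1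
        linarith
      have heq : ∀ᶠ n : ℕ in atTop,
          Real.log n / (Real.log n - Real.log (Real.log (2 * (n : ℝ)))) +
            Real.log n / (n : ℝ) = Up n := by
        filter_upwards [hDpos, eventually_ge_atTop 2] with n hDn hn
        have hn0 : (n : ℝ) ≠ 0 := by positivity
        simp only [hUpdef]
        field_simp
      have := hD.add h_logn_div_n
      rw [add_zero] at this
      exact this.congr' heq
    -- main squeeze
    refine tendsto_of_tendsto_of_tendsto_of_le_of_le' hLo hUp ?_ ?_
    all_goals {
      filter_upwards [eventually_ge_atTop 10,
        (HC.comp h2n).eventually (eventually_le_nhds (by norm_num : (0:ℝ) < 1/4)),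
        h_llog.eventually (eventually_le_nhds (by norm_num : (0:ℝ) < 1/2))]
        with n hn10 hq hll
      obtain ⟨hmem, hmax⟩ := hM n (by omega)
      simp only [Finset.mem_Icc] at hmem
      set m := M n with hmdef
      have hm1 : 1 ≤ m := hmem.1
      have hmn : m ≤ n := hmem.2
      have hnR2 : (2:ℝ) ≤ (n:ℝ) := by exact_mod_cast (by omega : 2 ≤ n)
      have hn0 : (0:ℝ) < (n:ℝ) := by linarith
      have hln_pos : 0 < Real.log n := Real.log_pos (by linarith)
      have hL_pos : 0 < Real.log (2 * (n:ℝ)) := Real.log_pos (by linarith)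
      -- m ≥ 2
      have hm2 : 2 ≤ m := by
        by_contra hc
        have hm1' : m = 1 := by omega
        have h1 : a n 2 ≤ a n m := hmax 2 (Finset.mem_Icc.2 ⟨by omega, by omega⟩)
        rw [hm1'] at h1
        have := ratio_right (p := 1) (by exact_mod_cast h1)
        norm_num at this
        have h4 : (2:ℝ)^n ≤ 2^2 := by norm_num; linarith
        have := (pow_le_pow_iff_right₀ (by norm_num : (1:ℝ) < 2)).mp h4
        omega
      -- inequality (B): (m-1)·log(2m) ≤ n
      have hBineq : ((m:ℝ) - 1) * Real.log (2 * (m:ℝ)) ≤ (n:ℝ) := by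
        have h1 : a n (m - 1) ≤ a n m := hmax _ (Finset.mem_Icc.2 ⟨by omega, by omega⟩)
        have hsub : m - 1 + 1 = m := by omega
        have h2 : a n (m-1) ≤ a n ((m-1) + 1) := by rw [hsub]; exact h1
        have h3 := keyB (p := m - 1) (by omega) (ratio_left h2)
        have hc1 : ((m - 1 : ℕ) : ℝ) = (m:ℝ) - 1 := by
          have : (1:ℕ) ≤ m := hm1
          push_cast [Nat.cast_sub this]
          ring
        rw [hc1] at h3
        have hc2 : (m:ℝ) - 1 + 1 = (m:ℝ) := by ring
        rw [hc2] at h3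
        exact h3
      -- m + 1 ≤ n
      have hmn' : m + 1 ≤ n := by
        by_contra hc
        have hmeq : m = n := by omega
        have hlog2 : (2:ℝ) ≤ Real.log (2 * (n:ℝ)) := by
          rw [Real.le_log_iff_exp_le (by linarith)]
          have h1 : Real.exp 2 = Real.exp 1 * Real.exp 1 := by
            rw [← Real.exp_add]; norm_num
          have h2 : Real.exp 1 < 2.7182818286 := Real.exp_one_lt_d9
          have h3 : Real.exp 2 < 8 := by nlinarith [Real.exp_pos 1]
          have : (10:ℝ) ≤ (n:ℝ) := by exact_mod_cast hn10
          linarith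
        rw [hmeq] at hBineq
        have hnR10 : (10:ℝ) ≤ (n:ℝ) := by exact_mod_cast hn10
        nlinarith
      -- inequality (A): n ≤ (m+1)·log(2(m+1))
      have hAineq : (n:ℝ) ≤ ((m:ℝ) + 1) * Real.log (2 * ((m:ℝ) + 1)) := by
        have h1 : a n (m + 1) ≤ a n m := hmax _ (Finset.mem_Icc.2 ⟨by omega, hmn'⟩)
        exact keyA hm1 (ratio_right h1)
      -- derived bounds
      set x : ℝ := (m:ℝ) with hxdef
      have hx2 : (2:ℝ) ≤ x := by rw [hxdef]; exact_mod_cast hm2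
      have hxn : x + 1 ≤ (n:ℝ) := by rw [hxdef]; exact_mod_cast hmn'
      have hlog2x1_pos : 0 < Real.log (2 * (x + 1)) := Real.log_pos (by linarith)
      have hlog2x_pos : 0 < Real.log (2 * x) := Real.log_pos (by linarith)
      -- lower bound on x : x ≥ n / log(2n) - 1
      have hxlow : (n:ℝ) / Real.log (2 * (n:ℝ)) - 1 ≤ x := by
        have s1 : (n:ℝ) / Real.log (2 * (x + 1)) ≤ x + 1 :=
          (div_le_iff₀ hlog2x1_pos).2 hAineq
        have s2 : Real.log (2 * (x + 1)) ≤ Real.log (2 * (n:ℝ)) :=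
          Real.log_le_log (by linarith) (by linarith)
        have s3 : (n:ℝ) / Real.log (2 * (n:ℝ)) ≤ (n:ℝ) / Real.log (2 * (x + 1)) :=
          div_le_div_of_nonneg_left (le_of_lt hn0) hlog2x1_pos s2
        linarith
      -- n / log(2n) ≥ 2
      have hq2 : (2:ℝ) ≤ (n:ℝ) / Real.log (2 * (n:ℝ)) := by
        have hq' : Real.log (2 * (n:ℝ)) / (2 * (n:ℝ)) ≤ 1/4 := hq
        have : Real.log (2 * (n:ℝ)) ≤ (n:ℝ) / 2 := by
          rw [div_le_iff₀ (by linarith : (0:ℝ) < 2 * (n:ℝ))] at hq'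
          linarith
        rw [le_div_iff₀ hL_pos]
        linarith
      -- D n positive
      have hDpos : 0 < Real.log n - Real.log (Real.log (2 * (n:ℝ))) := by
        have := (div_le_iff₀ hln_pos).mp hll
        linarith
      -- log(2x) ≥ D n
      have hlogD : Real.log n - Real.log (Real.log (2 * (n:ℝ))) ≤ Real.log (2 * x) := by
        have h2x : (n:ℝ) / Real.log (2 * (n:ℝ)) ≤ 2 * x := by linarith
        have := Real.log_le_log (by linarith : (0:ℝ) < (n:ℝ) / Real.log (2 * (n:ℝ))) h2x
        rw [Real.log_div (ne_of_gt hn0) (ne_of_gt hL_pos)] at this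
        exact this
      -- upper bound on x : x ≤ n / D + 1
      have hxup : x ≤ (n:ℝ) / (Real.log n - Real.log (Real.log (2 * (n:ℝ)))) + 1 := by
        have s1 : x - 1 ≤ (n:ℝ) / Real.log (2 * x) := by
          rw [le_div_iff₀ hlog2x_pos]
          linarith [hBineq]
        have s2 : (n:ℝ) / Real.log (2 * x)
            ≤ (n:ℝ) / (Real.log n - Real.log (Real.log (2 * (n:ℝ)))) :=
          div_le_div_of_nonneg_left (le_of_lt hn0) hDpos hlogD
        linarith
      -- conclude the needed inequality
      have hgn : 0 ≤ Real.log n / (n:ℝ) := div_nonneg (le_of_lt hln_pos) (le_of_lt hn0)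
      have hTeq : x * Real.log n / (n:ℝ) = x * (Real.log n / (n:ℝ)) := by
        rw [mul_div_assoc]
      first
      | ( -- lower bound goal : Lo n ≤ T n
          show Lo n ≤ (m:ℝ) * Real.log n / (n:ℝ)
          rw [show ((m:ℝ)) = x from rfl, hTeq]
          simp only [hLodef]
          exact mul_le_mul_of_nonneg_right hxlow hgn )
      | ( -- upper bound goal : T n ≤ Up n
          show (m:ℝ) * Real.log n / (n:ℝ) ≤ Up n
          rw [show ((m:ℝ)) = x from rfl, hTeq]
          simp only [hUpdef]
          exact mul_le_mul_of_nonneg_right hxup hgn )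
    }

end CatalanSat
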